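/- Let U be a finite subset of the lattice sℤ^d and ∂U its outer boundary (lattice points not in U whose cube Q_s(J') shares boundary with the cube of some J ∈ U). If E(U) := ⋃_{J∈U} Q_s(J), then there exist dimensional constants C such that C^{-1} #(∂U) s^{d-1} ≤ Per(E(U)) ≤ C #(∂U) s^{d-1}. -/

import Mathlib

open Real Set MeasureTheory

/-- The closed cube of side `s` centered at `J` in `ℝ^d`. -/
def latticeCube (d : ℕ) (s : ℝ) (J : EuclideanSpace ℝ (Fin d)) :
    Set (EuclideanSpace ℝ (Fin d)) :=
  {y | ∀ i, |y i - J i| ≤ s / 2}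

/-!
For the upper bound, every point of `∂E(U)` lies on the boundary of a cube `Q_s(K)` with
`K ∈ ∂U`, and the boundary of a cube is covered by `2d` closed faces, each of
`(d-1)`-dimensional Hausdorff measure at most `d^(d-1) s^(d-1)`.

For the lower bound, the relatively open faces separating a cube of `U` from a cube outside `U`
("exposed faces") are pairwise disjoint, lie in `∂E(U)`, and each has measure at least
`s^(d-1)`. Every `K ∈ ∂U` is within `ℓ^∞`-distance `s` of the inner cube of an exposed face
(walk from `K` to its neighbour in `U` one coordinate at a time), and a lattice point has only
`3^d` lattice points within that distance, so `#∂U ≤ 3^d · #(exposed faces)`.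

Face measures are compared with Lebesgue measure on `ℝ^(d-1)` through the coordinate insertion
`ℝ^(d-1) → ℝ^d`, which is `1`-antilipschitz and `d`-Lipschitz.
-/

open scoped NNReal ENNReal
open Metric

namespace LatticeCube

variable {d n : ℕ} {s : ℝ}

section Lattice

variable {a b : ℝ}

lemma exists_int_sub_eq_mul (ha : ∃ k : ℤ, a = k * s) (hb : ∃ k : ℤ, b = k * s) :
    ∃ m : ℤ, a - b = m * s := by
  obtain ⟨k, rfl⟩ := ha
  obtain ⟨l, rfl⟩ := hb
  exact ⟨k - l, by push_cast; ring⟩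

lemma eq_of_abs_sub_lt (hs : 0 < s) (ha : ∃ k : ℤ, a = k * s) (hb : ∃ k : ℤ, b = k * s)
    (h : |a - b| < s) : a = b := by
  obtain ⟨m, hm⟩ := exists_int_sub_eq_mul ha hb
  rw [hm, abs_mul, abs_of_pos hs] at h
  have : |m| < 1 := by exact_mod_cast (mul_lt_iff_lt_one_left hs).1 h
  have : m = 0 := by rw [abs_lt] at this; omega
  rwa [this, Int.cast_zero, zero_mul, sub_eq_zero] at hm

lemma exists_abs_le_one_of_abs_sub_lt (hs : 0 < s) (ha : ∃ k : ℤ, a = k * s)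
    (hb : ∃ k : ℤ, b = k * s) (h : |a - b| < 2 * s) : ∃ m : ℤ, |m| ≤ 1 ∧ a - b = m * s := by
  obtain ⟨m, hm⟩ := exists_int_sub_eq_mul ha hb
  rw [hm, abs_mul, abs_of_pos hs] at h
  have : |m| < 2 := by exact_mod_cast lt_of_mul_lt_mul_right h hs.le
  exact ⟨m, by omega, hm⟩

lemma exists_units_of_abs_sub_le (hs : 0 < s) (ha : ∃ k : ℤ, a = k * s)
    (hb : ∃ k : ℤ, b = k * s) (h : |a - b| ≤ s) (hab : a ≠ b) : ∃ σ : ℤˣ, a - b = σ * s := by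
  obtain ⟨m, hm1, hm⟩ := exists_abs_le_one_of_abs_sub_lt hs ha hb (by linarith)
  have hm0 : m ≠ 0 := by rintro rfl; exact hab (sub_eq_zero.1 (by simpa using hm))
  exact ⟨(Int.isUnit_iff.2 (by rw [abs_le] at hm1; omega)).unit, hm⟩

lemma eq_zero_or_eq_of_abs_sub_le (hs : 0 < s) (σ : ℤˣ) {m : ℤ}
    (h : |(σ : ℤ) * (s / 2) - m * s| ≤ s / 2) : m = 0 ∨ m = σ := by
  rw [show (σ : ℤ) * (s / 2) - m * s = (((σ : ℤ) - 2 * m : ℤ) : ℝ) * (s / 2) by push_cast; ring,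
    abs_mul, abs_of_pos (half_pos hs)] at h
  have h1 : |(((σ : ℤ) - 2 * m : ℤ) : ℝ)| ≤ 1 :=
    le_of_mul_le_mul_right (by linarith) (half_pos hs)
  have h2 : |(σ : ℤ) - 2 * m| ≤ 1 := by exact_mod_cast h1
  rw [abs_le] at h2
  rcases Int.units_eq_one_or σ with rfl | rfl <;>
    simp only [Units.val_one, Units.val_neg] at h2 ⊢ <;> omega

end Lattice

def InLattice (s : ℝ) (J : EuclideanSpace ℝ (Fin d)) : Prop :=
  ∀ i, ∃ k : ℤ, J i = k * s

section Cube

variable {y J K : EuclideanSpace ℝ (Fin d)}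

lemma latticeCube_eq_preimage_closedBall (hs : 0 ≤ s) (J : EuclideanSpace ℝ (Fin d)) :
    latticeCube d s J = WithLp.ofLp ⁻¹' closedBall (WithLp.ofLp J) (s / 2) := by
  ext y
  simp [latticeCube, dist_pi_le_iff (by positivity : 0 ≤ s / 2), Real.dist_eq]

lemma isClosed_latticeCube (J : EuclideanSpace ℝ (Fin d)) : IsClosed (latticeCube d s J) := by
  simp only [latticeCube, ofPred_forall]
  exact isClosed_iInter fun i => isClosed_le (by fun_prop) continuous_const

lemma interior_latticeCube (hs : 0 < s) (J : EuclideanSpace ℝ (Fin d)) :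
    interior (latticeCube d s J) = WithLp.ofLp ⁻¹' ball (WithLp.ofLp J) (s / 2) := by
  rw [latticeCube_eq_preimage_closedBall hs.le, ← interior_closedBall _ (by positivity : s / 2 ≠ 0)]
  exact ((PiLp.homeomorph 2 _).preimage_interior _).symm

lemma mem_interior_latticeCube (hs : 0 < s) :
    y ∈ interior (latticeCube d s J) ↔ ∀ i, |y i - J i| < s / 2 := by
  simp [interior_latticeCube hs, dist_pi_lt_iff (by positivity : 0 < s / 2), Real.dist_eq]

lemma closure_interior_latticeCube (hs : 0 < s) (J : EuclideanSpace ℝ (Fin d)) :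
    closure (interior (latticeCube d s J)) = latticeCube d s J := by
  rw [interior_latticeCube hs, latticeCube_eq_preimage_closedBall hs.le,
    ← closure_ball _ (by positivity : s / 2 ≠ 0)]
  exact ((PiLp.homeomorph 2 _).preimage_closure _).symm

lemma exists_inLattice_mem_latticeCube (hs : 0 < s) (y : EuclideanSpace ℝ (Fin d)) :
    ∃ K, InLattice s K ∧ y ∈ latticeCube d s K := by
  refine ⟨WithLp.toLp 2 fun i => round (y i / s) * s, fun i => ⟨_, rfl⟩, fun i => ?_⟩
  have h : y i - round (y i / s) * s = (y i / s - round (y i / s)) * s := by field_simp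
  simp only [h, abs_mul, abs_of_pos hs]
  nlinarith [abs_sub_round (y i / s)]

lemma abs_sub_le_of_mem_latticeCube (hJ : y ∈ latticeCube d s J) (hK : y ∈ latticeCube d s K)
    (i : Fin d) : |J i - K i| ≤ s := by
  have hJi := hJ i
  rw [abs_sub_comm] at hJi
  linarith [abs_sub_le (J i) (y i) (K i), hK i]

lemma eq_of_mem_latticeCube_of_mem_interior (hs : 0 < s) (hJ : InLattice s J)
    (hK : InLattice s K) (hyJ : y ∈ latticeCube d s J) (hyK : y ∈ interior (latticeCube d s K)) :
    J = K := by
  refine PiLp.ext fun i => eq_of_abs_sub_lt hs (hJ i) (hK i) ?_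
  have hJi := hyJ i
  rw [abs_sub_comm] at hJi
  linarith [abs_sub_le (J i) (y i) (K i), (mem_interior_latticeCube hs).1 hyK i]

end Cube

section Block

variable {A K : EuclideanSpace ℝ (Fin d)}

open Classical in
/-- The `3^d` lattice points `A + s v`, `v ∈ {-1, 0, 1}^d`. -/
noncomputable def latticeBlock (s : ℝ) (A : EuclideanSpace ℝ (Fin d)) :
    Finset (EuclideanSpace ℝ (Fin d)) :=
  Finset.univ.image fun v : Fin d → Fin 3 => WithLp.toLp 2 fun i => A i + ((v i : ℝ) - 1) * s

lemma card_latticeBlock_le (s : ℝ) (A : EuclideanSpace ℝ (Fin d)) :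
    (latticeBlock s A).card ≤ 3 ^ d :=
  Finset.card_image_le.trans (by simp)

lemma InLattice.of_mem_latticeBlock (hA : InLattice s A) (hK : K ∈ latticeBlock s A) :
    InLattice s K := by
  obtain ⟨v, -, rfl⟩ := Finset.mem_image.1 hK
  intro i
  obtain ⟨k, hk⟩ := hA i
  exact ⟨k + v i - 1, by simp [hk]; ring⟩

lemma mem_latticeBlock (hs : 0 < s) (hA : InLattice s A) (hK : InLattice s K)
    (h : ∀ i, |K i - A i| < 2 * s) : K ∈ latticeBlock s A := by
  choose m hm1 hm using fun i => exists_abs_le_one_of_abs_sub_lt hs (hK i) (hA i) (h i)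
  have hm' : ∀ i, 0 ≤ m i + 1 ∧ m i + 1 < 3 := fun i => by have := abs_le.1 (hm1 i); omega
  refine Finset.mem_image.2 ⟨fun i => ⟨(m i + 1).toNat, by have := hm' i; omega⟩,
    Finset.mem_univ _, PiLp.ext fun i => ?_⟩
  have hcast : (((m i + 1).toNat : ℕ) : ℝ) = m i + 1 := by
    exact_mod_cast Int.toNat_of_nonneg (hm' i).1
  simp only [hcast]
  linarith [hm i]

end Block

section Union

variable {U B : Finset (EuclideanSpace ℝ (Fin d))} {x J K : EuclideanSpace ℝ (Fin d)}

/-- The outer boundary `∂U` of `U` in `sℤ^d`. -/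
def outerBoundary (s : ℝ) (U : Finset (EuclideanSpace ℝ (Fin d))) :
    Set (EuclideanSpace ℝ (Fin d)) :=
  {K | InLattice s K ∧ K ∉ U ∧
    ∃ J ∈ U, (frontier (latticeCube d s J) ∩ frontier (latticeCube d s K)).Nonempty}

lemma disjoint_interior_latticeCube_iUnion (hs : 0 < s) (hU : ∀ J ∈ U, InLattice s J)
    (hK : InLattice s K) (hKU : K ∉ U) :
    Disjoint (interior (latticeCube d s K)) (⋃ J ∈ U, latticeCube d s J) := by
  refine Set.disjoint_left.2 fun y hyK hyU => ?_
  obtain ⟨J, hJU, hyJ⟩ := mem_iUnion₂.1 hyU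
  exact hKU (eq_of_mem_latticeCube_of_mem_interior hs (hU J hJU) hK hyJ hyK ▸ hJU)

lemma latticeCube_inter_subset_frontier (hs : 0 < s) (hU : ∀ J ∈ U, InLattice s J)
    (hJU : J ∈ U) (hK : InLattice s K) (hKU : K ∉ U) :
    latticeCube d s J ∩ latticeCube d s K ⊆ frontier (⋃ J ∈ U, latticeCube d s J) := by
  rintro y ⟨hyJ, hyK⟩
  have hK' := closure_mono (disjoint_interior_latticeCube_iUnion hs hU hK hKU).subset_compl_right
  rw [closure_interior_latticeCube hs] at hK'
  rw [frontier_eq_closure_inter_closure]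
  exact ⟨subset_closure (mem_biUnion hJU hyJ), hK' hyK⟩

/-- Near `x`, the complement of the union lies in the finitely many cubes around `x` that are
not in `U`; their union is closed, so it contains `x` once `x` is a limit of the complement. -/
lemma exists_mem_latticeCube_of_notMem_interior (hs : 0 < s)
    (hx : x ∉ interior (⋃ J ∈ U, latticeCube d s J)) :
    ∃ K, InLattice s K ∧ K ∉ U ∧ x ∈ latticeCube d s K := by
  classical
  obtain ⟨A, hA, hxA⟩ := exists_inLattice_mem_latticeCube hs x
  set F := ⋃ K ∈ (latticeBlock s A).filter (· ∉ U), latticeCube d s K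
  have hsub : ball x (s / 2) ∩ (⋃ J ∈ U, latticeCube d s J)ᶜ ⊆ F := by
    rintro y ⟨hyx, hyU⟩
    obtain ⟨K, hK, hyK⟩ := exists_inLattice_mem_latticeCube hs y
    have hKU : K ∉ U := fun hKU => hyU (mem_biUnion hKU hyK)
    refine mem_biUnion (Finset.mem_filter.2 ⟨mem_latticeBlock hs hA hK fun i => ?_, hKU⟩) hyK
    have hyx : |y i - x i| < s / 2 :=
      (PiLp.dist_apply_le y x i).trans_lt (mem_ball.1 hyx)
    have hyKi := hyK i
    rw [abs_sub_comm] at hyKi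
    linarith [abs_sub_le (K i) (y i) (A i), abs_sub_le (y i) (x i) (A i), hxA i]
  have hxF : x ∈ closure F := closure_mono hsub <| isOpen_ball.inter_closure
    ⟨mem_ball_self (by positivity), by rwa [closure_compl]⟩
  rw [(isClosed_biUnion_finset fun K _ => isClosed_latticeCube K).closure_eq] at hxF
  obtain ⟨K, hK, hxK⟩ := mem_iUnion₂.1 hxF
  obtain ⟨hKA, hKU⟩ := Finset.mem_filter.1 hK
  exact ⟨K, hA.of_mem_latticeBlock hKA, hKU, hxK⟩

lemma frontier_iUnion_latticeCube_subset (hs : 0 < s) (hU : ∀ J ∈ U, InLattice s J)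
    (hB : outerBoundary s U ⊆ B) :
    frontier (⋃ J ∈ U, latticeCube d s J) ⊆ ⋃ K ∈ B, frontier (latticeCube d s K) := by
  intro x hx
  obtain ⟨J, hJU, hxJ⟩ := mem_iUnion₂.1 <|
    (isClosed_biUnion_finset fun J _ => isClosed_latticeCube J).frontier_subset hx
  obtain ⟨K, hK, hKU, hxK⟩ := exists_mem_latticeCube_of_notMem_interior hs hx.2
  have hxJ' : x ∈ frontier (latticeCube d s J) :=
    ⟨subset_closure hxJ, fun h => hx.2 (interior_mono (subset_biUnion_of_mem hJU) h)⟩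
  have hxK' : x ∈ frontier (latticeCube d s K) :=
    ⟨subset_closure hxK, fun h =>
      hKU (eq_of_mem_latticeCube_of_mem_interior hs (hU J hJU) hK hxJ h ▸ hJU)⟩
  exact mem_biUnion (hB ⟨hK, hKU, J, hJU, x, hxJ', hxK'⟩) hxK'

end Union

section Faces

variable {U B : Finset (EuclideanSpace ℝ (Fin d))} {A A' J K : EuclideanSpace ℝ (Fin d)}
  {t t' : Fin d} {σ σ' : ℤˣ}

/-- The lattice point across the face of `Q_s(A)` orthogonal to `e_t`, on the side `σ`. -/
noncomputable def latticeNeighbor (s : ℝ) (A : EuclideanSpace ℝ (Fin d)) (t : Fin d) (σ : ℤˣ) :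
    EuclideanSpace ℝ (Fin d) :=
  A + EuclideanSpace.single t ((σ : ℤ) * s)

lemma latticeNeighbor_apply (i : Fin d) :
    latticeNeighbor s A t σ i = A i + if i = t then (σ : ℤ) * s else 0 := by
  simp [latticeNeighbor]

lemma InLattice.latticeNeighbor (hA : InLattice s A) : InLattice s (latticeNeighbor s A t σ) := by
  intro i
  obtain ⟨k, hk⟩ := hA i
  rw [latticeNeighbor_apply, hk]
  split_ifs
  · exact ⟨k + σ, by push_cast; ring⟩
  · exact ⟨k, by ring⟩

lemma latticeNeighbor_ne_self (hs : s ≠ 0) : latticeNeighbor s A t σ ≠ A := by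
  intro h
  have := congrArg (· t) h
  simp [latticeNeighbor_apply, hs] at this

lemma eq_and_eq_of_latticeNeighbor_eq (hs : s ≠ 0)
    (h : latticeNeighbor s A t σ = latticeNeighbor s A t' σ') : t = t' ∧ σ = σ' := by
  have ht := congrArg (· t) h
  by_cases htt : t = t'
  · subst htt
    simp only [latticeNeighbor_apply, if_pos, add_right_inj, mul_eq_mul_right_iff, hs,
      or_false, Int.cast_inj, Units.val_inj] at ht
    exact ⟨rfl, ht⟩
  · simp [latticeNeighbor_apply, htt, hs] at ht

open Classical in
noncomputable def exposedFaces (s : ℝ) (U : Finset (EuclideanSpace ℝ (Fin d))) :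
    Finset (EuclideanSpace ℝ (Fin d) × Fin d × ℤˣ) :=
  (U ×ˢ Finset.univ).filter fun p => latticeNeighbor s p.1 p.2.1 p.2.2 ∉ U

lemma mem_exposedFaces {p : EuclideanSpace ℝ (Fin d) × Fin d × ℤˣ} :
    p ∈ exposedFaces s U ↔ p.1 ∈ U ∧ latticeNeighbor s p.1 p.2.1 p.2.2 ∉ U := by
  simp [exposedFaces]

lemma exists_latticeNeighbor_eq (hs : 0 < s) (hA : InLattice s A) (hA' : InLattice s A')
    (hne : A' t ≠ A t) (ht : |A' t - A t| ≤ s) (hoff : ∀ i ≠ t, A' i = A i) :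
    ∃ σ, latticeNeighbor s A t σ = A' := by
  obtain ⟨σ, hσ⟩ := exists_units_of_abs_sub_le hs (hA' t) (hA t) ht hne
  refine ⟨σ, PiLp.ext fun i => ?_⟩
  rw [latticeNeighbor_apply]
  split_ifs with hi
  · rw [hi]; linarith
  · rw [add_zero, hoff i hi]

/-- Walk from `K` to `J` changing one coordinate at a time; the first step that enters `U`
crosses an exposed face. -/
lemma exists_mem_exposedFaces_near (hs : 0 < s) (hU : ∀ J ∈ U, InLattice s J) (hK : InLattice s K)
    (hKU : K ∉ U) (hJU : J ∈ U) (hJK : ∀ i, |J i - K i| ≤ s) :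
    ∃ p ∈ exposedFaces s U, ∀ i, |K i - p.1 i| ≤ s := by
  classical
  let P : ℕ → EuclideanSpace ℝ (Fin d) := fun m => WithLp.toLp 2 fun i => if i < m then J i else K i
  have hP : ∀ m i, P m i = if i < m then J i else K i := fun _ _ => rfl
  have hPJ : ∀ m, d ≤ m → P m = J := fun m hm => PiLp.ext fun i => by simp [hP, i.2.trans_le hm]
  have hPlat : ∀ m, InLattice s (P m) := fun m i => by
    rw [hP]; split_ifs; exacts [hU J hJU i, hK i]
  obtain ⟨m, hmU, hm1U⟩ := Nat.exists_not_and_succ_of_not_zero_of_exists (p := (P · ∈ U))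
    (by convert hKU; exact PiLp.ext fun i => by simp [hP]) ⟨d, hPJ d le_rfl ▸ hJU⟩
  have hmd : m < d := by by_contra h; exact hmU (hPJ m (not_lt.1 h) ▸ hJU)
  set t : Fin d := ⟨m, hmd⟩
  have hPt : ∀ i ≠ t, P m i = P (m + 1) i := fun i hi => by
    have : (i : ℕ) < m + 1 ↔ (i : ℕ) < m := by
      have : (i : ℕ) ≠ m := fun h => hi (Fin.ext h)
      omega
    simp only [hP, this]
  have hne : P m t ≠ P (m + 1) t := fun h =>
    hmU (PiLp.ext (fun i => if hi : i = t then hi ▸ h else hPt i hi) ▸ hm1U)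
  obtain ⟨σ, hσ⟩ := exists_latticeNeighbor_eq hs (hPlat (m + 1)) (hPlat m) hne
    (by simpa [hP, t, abs_sub_comm] using hJK t) hPt
  refine ⟨(P (m + 1), t, σ), mem_exposedFaces.2 ⟨hm1U, hσ ▸ hmU⟩, fun i => ?_⟩
  rw [hP]
  split_ifs
  · rw [abs_sub_comm]; exact hJK i
  · simpa using hs.le

lemma card_le_three_pow_mul_card_exposedFaces (hs : 0 < s) (hU : ∀ J ∈ U, InLattice s J)
    (hB : ↑B ⊆ outerBoundary s U) : B.card ≤ 3 ^ d * (exposedFaces s U).card := by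
  classical
  have hsub : B ⊆ (exposedFaces s U).biUnion fun p => latticeBlock s p.1 := by
    intro K hKB
    obtain ⟨hK, hKU, J, hJU, x, hxJ, hxK⟩ := hB hKB
    obtain ⟨p, hp, hKp⟩ := exists_mem_exposedFaces_near hs hU hK hKU hJU
      (abs_sub_le_of_mem_latticeCube ((isClosed_latticeCube J).frontier_subset hxJ)
        ((isClosed_latticeCube K).frontier_subset hxK))
    exact Finset.mem_biUnion.2 ⟨p, hp, mem_latticeBlock hs (hU _ (mem_exposedFaces.1 hp).1) hK
      fun i => (hKp i).trans_lt (by linarith)⟩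
  rw [mul_comm]
  exact (Finset.card_le_card hsub).trans
    (Finset.card_biUnion_le_card_mul _ _ _ fun p _ => card_latticeBlock_le s p.1)

end Faces

section Measure

noncomputable def insertCoord (t : Fin (n + 1)) (c : ℝ) (z : Fin n → ℝ) :
    EuclideanSpace ℝ (Fin (n + 1)) :=
  WithLp.toLp 2 (t.insertNth c z)

lemma isometry_insertNth (t : Fin (n + 1)) (c : ℝ) :
    Isometry (Fin.insertNth (α := fun _ => ℝ) t c) :=
  Isometry.of_dist_eq fun z z' => by simp [Fin.dist_insertNth_insertNth]

lemma antilipschitzWith_insertCoord (t : Fin (n + 1)) (c : ℝ) :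
    AntilipschitzWith 1 (insertCoord t c) := by
  have := (PiLp.antilipschitzWith_toLp 2 _).comp (isometry_insertNth t c).antilipschitz
  rwa [mul_one] at this

lemma lipschitzWith_insertCoord (t : Fin (n + 1)) (c : ℝ) :
    LipschitzWith (n + 1) (insertCoord t c) := by
  refine ((PiLp.lipschitzWith_toLp 2 _).comp (isometry_insertNth t c).lipschitz).weaken ?_
  rw [mul_one, Fintype.card_fin, ← NNReal.coe_le_coe, NNReal.coe_rpow]
  push_cast
  exact Real.rpow_le_self_of_one_le (by linarith [(n.cast_nonneg : (0 : ℝ) ≤ n)]) (by norm_num)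

lemma hausdorffMeasure_pi_fin_eq_volume : (μH[n] : Measure (Fin n → ℝ)) = volume := by
  simpa using hausdorffMeasure_pi_real (ι := Fin n)

lemma volume_le_hausdorffMeasure_image_insertCoord (t : Fin (n + 1)) (c : ℝ) (S : Set (Fin n → ℝ)) :
    volume S ≤ μH[n] (insertCoord t c '' S) := by
  simpa [hausdorffMeasure_pi_fin_eq_volume] using
    (antilipschitzWith_insertCoord t c).le_hausdorffMeasure_image n.cast_nonneg S

lemma hausdorffMeasure_image_insertCoord_le (t : Fin (n + 1)) (c : ℝ) (S : Set (Fin n → ℝ)) :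
    μH[n] (insertCoord t c '' S) ≤ ((n + 1) ^ n : ℝ≥0∞) * volume S := by
  simpa [hausdorffMeasure_pi_fin_eq_volume] using
    (lipschitzWith_insertCoord t c).hausdorffMeasure_image_le n.cast_nonneg S

end Measure

section CubeFaces

variable {U B : Finset (EuclideanSpace ℝ (Fin (n + 1)))} {y A J : EuclideanSpace ℝ (Fin (n + 1))}
  {t : Fin (n + 1)} {σ : ℤˣ}

/-- The relatively open face of `Q_s(A)` orthogonal to `e_t`, on the side `σ`. -/
def openFace (s : ℝ) (A : EuclideanSpace ℝ (Fin (n + 1))) (t : Fin (n + 1)) (σ : ℤˣ) :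
    Set (EuclideanSpace ℝ (Fin (n + 1))) :=
  insertCoord t (A t + (σ : ℤ) * (s / 2)) '' ball (t.removeNth (WithLp.ofLp A)) (s / 2)

def closedFace (s : ℝ) (A : EuclideanSpace ℝ (Fin (n + 1))) (t : Fin (n + 1)) (σ : ℤˣ) :
    Set (EuclideanSpace ℝ (Fin (n + 1))) :=
  insertCoord t (A t + (σ : ℤ) * (s / 2)) '' closedBall (t.removeNth (WithLp.ofLp A)) (s / 2)

lemma measurableSet_openFace (s : ℝ) (A : EuclideanSpace ℝ (Fin (n + 1))) (t : Fin (n + 1))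
    (σ : ℤˣ) : MeasurableSet (openFace s A t σ) :=
  ((antilipschitzWith_insertCoord t _).isClosedEmbedding
    (lipschitzWith_insertCoord t _).uniformContinuous).measurableEmbedding.measurableSet_image.2
    measurableSet_ball

lemma ofReal_pow_le_hausdorffMeasure_openFace (hs : 0 < s) (A : EuclideanSpace ℝ (Fin (n + 1)))
    (t : Fin (n + 1)) (σ : ℤˣ) : ENNReal.ofReal (s ^ n) ≤ μH[n] (openFace s A t σ) := by
  calc ENNReal.ofReal (s ^ n) = volume (ball (t.removeNth (WithLp.ofLp A)) (s / 2)) := by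
        rw [Real.volume_pi_ball _ (by positivity)]
        simp [mul_div_cancel₀]
    _ ≤ _ := volume_le_hausdorffMeasure_image_insertCoord t _ _

lemma hausdorffMeasure_closedFace_le (hs : 0 ≤ s) (A : EuclideanSpace ℝ (Fin (n + 1)))
    (t : Fin (n + 1)) (σ : ℤˣ) :
    μH[n] (closedFace s A t σ) ≤ ((n + 1) ^ n : ℝ≥0∞) * ENNReal.ofReal (s ^ n) := by
  refine (hausdorffMeasure_image_insertCoord_le t _ _).trans_eq ?_
  rw [Real.volume_pi_closedBall _ (by positivity)]
  simp [mul_div_cancel₀]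

lemma apply_of_mem_openFace (hs : 0 < s) (hy : y ∈ openFace s A t σ) :
    y t = A t + (σ : ℤ) * (s / 2) ∧ ∀ j ≠ t, |y j - A j| < s / 2 := by
  obtain ⟨z, hz, rfl⟩ := hy
  refine ⟨by simp [insertCoord], fun j hj => ?_⟩
  obtain ⟨j, rfl⟩ := Fin.exists_succAbove_eq hj
  rw [mem_ball, dist_pi_lt_iff (by positivity)] at hz
  simpa [insertCoord, Real.dist_eq, Fin.removeNth] using hz j

lemma openFace_subset_inter (hs : 0 < s) :
    openFace s A t σ ⊆ latticeCube (n + 1) s A ∩ latticeCube (n + 1) s (latticeNeighbor s A t σ) := by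
  intro y hy
  obtain ⟨hyt, hyj⟩ := apply_of_mem_openFace hs hy
  have hσ : |((σ : ℤ) : ℝ)| = 1 := abs_unit_intCast σ
  have hA : y t - A t = (σ : ℤ) * (s / 2) := by rw [hyt]; ring
  have hN : y t - (A t + (σ : ℤ) * s) = (σ : ℤ) * -(s / 2) := by rw [hyt]; ring
  refine ⟨fun i => ?_, fun i => ?_⟩ <;> rcases eq_or_ne i t with rfl | hi
  · rw [hA, abs_mul, hσ, one_mul, abs_of_pos (half_pos hs)]
  · exact (hyj i hi).le
  · rw [latticeNeighbor_apply, if_pos rfl, hN, abs_mul, hσ, one_mul, abs_neg,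
      abs_of_pos (half_pos hs)]
  · rw [latticeNeighbor_apply, if_neg hi, add_zero]
    exact (hyj i hi).le

lemma eq_or_eq_latticeNeighbor_of_mem_openFace (hs : 0 < s) (hA : InLattice s A)
    (hJ : InLattice s J) (hy : y ∈ openFace s A t σ) (hyJ : y ∈ latticeCube (n + 1) s J) :
    J = A ∨ J = latticeNeighbor s A t σ := by
  obtain ⟨hyt, hyj⟩ := apply_of_mem_openFace hs hy
  have hoff : ∀ j ≠ t, J j = A j := fun j hj => by
    refine eq_of_abs_sub_lt hs (hJ j) (hA j) ?_
    have hyJj := hyJ j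
    rw [abs_sub_comm] at hyJj
    linarith [abs_sub_le (J j) (y j) (A j), hyj j hj]
  obtain ⟨m, hm⟩ := exists_int_sub_eq_mul (hJ t) (hA t)
  have hm' := eq_zero_or_eq_of_abs_sub_le hs σ (m := m) (by convert hyJ t using 2; linarith)
  rcases hm' with rfl | rfl
  · refine .inl (PiLp.ext fun j => ?_)
    rcases eq_or_ne j t with rfl | hj
    · push_cast at hm; linarith
    · exact hoff j hj
  · refine .inr (PiLp.ext fun j => ?_)
    rw [latticeNeighbor_apply]
    split_ifs with hj
    · subst hj; linarith
    · rw [add_zero]; exact hoff j hj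

lemma pairwiseDisjoint_openFace (hs : 0 < s) (hU : ∀ J ∈ U, InLattice s J) :
    (exposedFaces s U : Set (EuclideanSpace ℝ (Fin (n + 1)) × Fin (n + 1) × ℤˣ)).PairwiseDisjoint
      fun p => openFace s p.1 p.2.1 p.2.2 := by
  rintro ⟨A, t, σ⟩ hp ⟨A', t', σ'⟩ hp' hne
  refine Set.disjoint_left.2 fun y hy hy' => hne ?_
  obtain ⟨hAU, hNU⟩ := mem_exposedFaces.1 hp
  have hA'U := (mem_exposedFaces.1 hp').1
  have hA := hU A hAU
  obtain ⟨hyA', hyN'⟩ := openFace_subset_inter hs hy'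
  obtain rfl : A' = A := (eq_or_eq_latticeNeighbor_of_mem_openFace hs hA (hU A' hA'U) hy hyA').resolve_right
    fun h => hNU (h ▸ hA'U)
  rcases eq_or_eq_latticeNeighbor_of_mem_openFace hs hA hA.latticeNeighbor hy hyN' with h | h
  · exact absurd h (latticeNeighbor_ne_self hs.ne')
  · obtain ⟨rfl, rfl⟩ := eq_and_eq_of_latticeNeighbor_eq hs.ne' h.symm
    rfl

lemma frontier_latticeCube_subset (hs : 0 < s) (K : EuclideanSpace ℝ (Fin (n + 1))) :
    frontier (latticeCube (n + 1) s K) ⊆ ⋃ p : Fin (n + 1) × ℤˣ, closedFace s K p.1 p.2 := by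
  intro y hy
  have hyK := (isClosed_latticeCube K).frontier_subset hy
  obtain ⟨t, ht⟩ : ∃ t, ¬ |y t - K t| < s / 2 := by
    by_contra! h
    exact hy.2 ((mem_interior_latticeCube hs).2 h)
  obtain ⟨σ, hσ⟩ : ∃ σ : ℤˣ, y t = K t + (σ : ℤ) * (s / 2) := by
    rcases (abs_eq (by positivity)).1 (le_antisymm (hyK t) (not_lt.1 ht)) with h | h
    · exact ⟨1, by push_cast; linarith⟩
    · exact ⟨-1, by push_cast; linarith⟩
  refine mem_iUnion.2 ⟨(t, σ), t.removeNth (WithLp.ofLp y), ?_, ?_⟩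
  · rw [mem_closedBall, dist_pi_le_iff (by positivity)]
    intro j
    simpa [Real.dist_eq, Fin.removeNth] using hyK (t.succAbove j)
  · rw [← hσ]
    exact congrArg (WithLp.toLp 2) (Fin.insertNth_self_removeNth t _)

lemma hausdorffMeasure_frontier_latticeCube_le (hs : 0 < s) (K : EuclideanSpace ℝ (Fin (n + 1))) :
    μH[n] (frontier (latticeCube (n + 1) s K)) ≤ ENNReal.ofReal (2 * (n + 1) ^ (n + 1) * s ^ n) :=
  calc μH[n] (frontier (latticeCube (n + 1) s K))
      ≤ ∑ p : Fin (n + 1) × ℤˣ, μH[n] (closedFace s K p.1 p.2) :=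
        (measure_mono (frontier_latticeCube_subset hs K)).trans (measure_iUnion_fintype_le _ _)
    _ ≤ ∑ p : Fin (n + 1) × ℤˣ, ((n + 1) ^ n : ℝ≥0∞) * ENNReal.ofReal (s ^ n) :=
        Finset.sum_le_sum fun p _ => hausdorffMeasure_closedFace_le hs.le K p.1 p.2
    _ = ENNReal.ofReal (2 * (n + 1) ^ (n + 1) * s ^ n) := by
        rw [show 2 * ((n : ℝ) + 1) ^ (n + 1) = ((2 * (n + 1) ^ (n + 1) : ℕ) : ℝ) by push_cast; ring,
          ENNReal.ofReal_mul (by positivity), ENNReal.ofReal_natCast, Finset.sum_const,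
          Finset.card_univ, Fintype.card_prod, Fintype.card_fin, Fintype.card_units_int,
          nsmul_eq_mul]
        push_cast
        ring

lemma ofReal_card_exposedFaces_le_hausdorffMeasure_frontier (hs : 0 < s)
    (hU : ∀ J ∈ U, InLattice s J) :
    ENNReal.ofReal ((exposedFaces s U).card * s ^ n) ≤
      μH[n] (frontier (⋃ J ∈ U, latticeCube (n + 1) s J)) :=
  calc ENNReal.ofReal ((exposedFaces s U).card * s ^ n)
      = ∑ _p ∈ exposedFaces s U, ENNReal.ofReal (s ^ n) := by
        rw [Finset.sum_const, nsmul_eq_mul, ENNReal.ofReal_mul (by positivity),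
          ENNReal.ofReal_natCast]
    _ ≤ ∑ p ∈ exposedFaces s U, μH[n] (openFace s p.1 p.2.1 p.2.2) :=
        Finset.sum_le_sum fun p _ => ofReal_pow_le_hausdorffMeasure_openFace hs _ _ _
    _ = μH[n] (⋃ p ∈ exposedFaces s U, openFace s p.1 p.2.1 p.2.2) :=
        (measure_biUnion_finset (pairwiseDisjoint_openFace hs hU)
          fun p _ => measurableSet_openFace _ _ _ _).symm
    _ ≤ μH[n] (frontier (⋃ J ∈ U, latticeCube (n + 1) s J)) := by
        refine measure_mono (iUnion₂_subset fun p hp => ?_)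
        obtain ⟨hAU, hNU⟩ := mem_exposedFaces.1 hp
        exact (openFace_subset_inter hs).trans
          (latticeCube_inter_subset_frontier hs hU hAU (hU _ hAU).latticeNeighbor hNU)

lemma hausdorffMeasure_frontier_le (hs : 0 < s) (hU : ∀ J ∈ U, InLattice s J)
    (hB : outerBoundary s U ⊆ B) :
    μH[n] (frontier (⋃ J ∈ U, latticeCube (n + 1) s J)) ≤
      ENNReal.ofReal (2 * (n + 1) ^ (n + 1) * B.card * s ^ n) :=
  calc μH[n] (frontier (⋃ J ∈ U, latticeCube (n + 1) s J))
      ≤ ∑ K ∈ B, μH[n] (frontier (latticeCube (n + 1) s K)) :=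
        (measure_mono (frontier_iUnion_latticeCube_subset hs hU hB)).trans
          (measure_biUnion_finset_le _ _)
    _ ≤ ∑ _K ∈ B, ENNReal.ofReal (2 * (n + 1) ^ (n + 1) * s ^ n) :=
        Finset.sum_le_sum fun K _ => hausdorffMeasure_frontier_latticeCube_le hs K
    _ = ENNReal.ofReal (2 * (n + 1) ^ (n + 1) * B.card * s ^ n) := by
        rw [Finset.sum_const, nsmul_eq_mul, ← ENNReal.ofReal_natCast,
          ← ENNReal.ofReal_mul (by positivity)]
        ring_nf

end CubeFaces

end LatticeCube

open LatticeCube in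
/-- For a finite union of lattice cubes `E(U) = ⋃_{J∈U} Q_s(J)`, the perimeter
(the `(d-1)`-dimensional Hausdorff measure of the topological boundary) is
comparable, with dimensional constants, to `#(∂U) s^{d-1}`, where `∂U` is the
outer boundary of `U` in the lattice `sℤ^d`. -/
theorem perimeter_comparable_boundary_card (d : ℕ) (hd : 2 ≤ d) :
    ∃ C : ℝ, 0 < C ∧ ∀ s : ℝ, 0 < s →
      ∀ U B : Finset (EuclideanSpace ℝ (Fin d)),
        (∀ J ∈ U, ∀ i, ∃ k : ℤ, J i = k * s) →
        (∀ J, J ∈ B ↔ ((∀ i, ∃ k : ℤ, J i = k * s) ∧ J ∉ U ∧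
          ∃ J' ∈ U, (frontier (latticeCube d s J') ∩ frontier (latticeCube d s J)).Nonempty)) →
        ENNReal.ofReal (C⁻¹ * B.card * s ^ (d - 1)) ≤
            (μH[((d : ℝ) - 1)] (frontier (⋃ J ∈ U, latticeCube d s J))) ∧
          (μH[((d : ℝ) - 1)] (frontier (⋃ J ∈ U, latticeCube d s J))) ≤
            ENNReal.ofReal (C * B.card * s ^ (d - 1)) := by
  obtain ⟨n, rfl⟩ : ∃ n, d = n + 1 := ⟨d - 1, by omega⟩
  set C : ℝ := 3 ^ (n + 1) + 2 * (n + 1) ^ (n + 1)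
  refine ⟨C, by positivity, fun s hs U B hU hB => ?_⟩
  have hB' : (B : Set (EuclideanSpace ℝ (Fin (n + 1)))) = outerBoundary s U := Set.ext hB
  rw [Nat.add_sub_cancel, show ((n + 1 : ℕ) : ℝ) - 1 = n by push_cast; ring]
  constructor
  · refine (ENNReal.ofReal_le_ofReal ?_).trans
      (ofReal_card_exposedFaces_le_hausdorffMeasure_frontier hs hU)
    have hcard : (B.card : ℝ) ≤ 3 ^ (n + 1) * (exposedFaces s U).card := by
      exact_mod_cast card_le_three_pow_mul_card_exposedFaces hs hU hB'.le
    have hC : 3 ^ (n + 1) ≤ C := le_add_of_nonneg_right (by positivity)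
    gcongr
    rw [inv_mul_le_iff₀ (by positivity)]
    exact hcard.trans (by gcongr)
  · refine (hausdorffMeasure_frontier_le hs hU hB'.ge).trans (ENNReal.ofReal_le_ofReal ?_)
    gcongr
    exact le_add_of_nonneg_left (by positivity)
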